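/- arXiv:1002.3117 — 3 statements merged into one kernel-verified Lean document; each statement's English description precedes it below -/
import Mathlib

section
/- Suppose λ ∈ ℝ^n, x ∈ {0,1}^n, and there is a probability distribution over vectors β taking values in [0,1]^n and a constant α ∈ (0,1] with E[β] = α·z for some z ∈ {0,1}^n. If for every β in the support, ⟨λ, x ⊕ β⟩ > ⟨λ, x⟩, then ⟨λ, x ⊕ z⟩ > ⟨λ, x⟩. -/
/-- Averaging argument: if there is a (finitely supported) probability distribution over vectors
`β` with values in `[0,1]^n` whose mean is `α·z` for some `α ∈ (0,1]` and binary `z`, and every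
`β` in the support satisfies `⟨λ, x ⊕ β⟩ > ⟨λ, x⟩`, then `⟨λ, x ⊕ z⟩ > ⟨λ, x⟩`.
Here `(x ⊕ f)_i = |x_i − f_i|` is the relative point. -/
theorem averaging_relative_point
    {n : ℕ} (lam : Fin n → ℝ) (x z : Fin n → ℝ)
    (hx : ∀ i, x i = 0 ∨ x i = 1) (hz : ∀ i, z i = 0 ∨ z i = 1)
    {ι : Type*} [Fintype ι] (p : ι → ℝ) (β : ι → Fin n → ℝ)
    (hp : ∀ k, 0 ≤ p k) (hp1 : ∑ k, p k = 1)
    (hβ01 : ∀ k i, β k i ∈ Set.Icc (0 : ℝ) 1)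
    (α : ℝ) (hα : α ∈ Set.Ioc (0 : ℝ) 1)
    (hmean : ∀ i, ∑ k, p k * β k i = α * z i)
    (hsupp : ∀ k, 0 < p k →
      ∑ i, lam i * |x i - β k i| > ∑ i, lam i * x i) :
    ∑ i, lam i * |x i - z i| > ∑ i, lam i * x i := by
  -- key affine identity
  have key : ∀ f : Fin n → ℝ, (∀ i, f i ∈ Set.Icc (0:ℝ) 1) →
      ∑ i, lam i * |x i - f i|
        = ∑ i, lam i * x i + ∑ i, lam i * (1 - 2 * x i) * f i := by
    intro f hf
    rw [← Finset.sum_add_distrib]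
    apply Finset.sum_congr rfl
    intro i _
    obtain ⟨h0, h1⟩ := hf i
    rcases hx i with h | h
    · rw [h, show (0:ℝ) - f i = -(f i) by ring, abs_neg, abs_of_nonneg h0]; ring
    · rw [h, abs_of_nonneg (by linarith : (0:ℝ) ≤ 1 - f i)]; ring
  have hS : ∀ k, 0 < p k → 0 < ∑ i, lam i * (1 - 2 * x i) * β k i := by
    intro k hk
    have := hsupp k hk
    rw [key (β k) (hβ01 k)] at this
    linarith
  -- weighted sum is positive
  have hex : ∃ k, 0 < p k := by
    by_contra h
    push_neg at h
    have : ∀ k, p k = 0 := fun k => le_antisymm (h k) (hp k)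
    simp [this] at hp1
  obtain ⟨k0, hk0⟩ := hex
  have hT : 0 < ∑ k, p k * ∑ i, lam i * (1 - 2 * x i) * β k i := by
    have hterm : ∀ k ∈ Finset.univ, 0 ≤ p k * ∑ i, lam i * (1 - 2 * x i) * β k i := by
      intro k _
      rcases eq_or_lt_of_le (hp k) with h | h
      · simp [← h]
      · exact le_of_lt (mul_pos h (hS k h))
    exact Finset.sum_pos' hterm ⟨k0, Finset.mem_univ k0, mul_pos hk0 (hS k0 hk0)⟩
  have hswap : ∑ k, p k * ∑ i, lam i * (1 - 2 * x i) * β k i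
      = α * ∑ i, lam i * (1 - 2 * x i) * z i := by
    calc ∑ k, p k * ∑ i, lam i * (1 - 2 * x i) * β k i
        = ∑ k, ∑ i, p k * (lam i * (1 - 2 * x i) * β k i) := by
          simp [Finset.mul_sum]
      _ = ∑ i, ∑ k, p k * (lam i * (1 - 2 * x i) * β k i) := Finset.sum_comm
      _ = ∑ i, lam i * (1 - 2 * x i) * ∑ k, p k * β k i := by
          apply Finset.sum_congr rfl; intro i _
          rw [Finset.mul_sum]; apply Finset.sum_congr rfl; intro k _; ring
      _ = α * ∑ i, lam i * (1 - 2 * x i) * z i := by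
          rw [Finset.mul_sum]; apply Finset.sum_congr rfl; intro i _
          rw [hmean i]; ring
  rw [hswap] at hT
  have hzpos : 0 < ∑ i, lam i * (1 - 2 * x i) * z i := by
    rcases mul_pos_iff.mp hT with ⟨_, h⟩ | ⟨h, _⟩
    · exact h
    · exact absurd hα.1 (not_lt.mpr h.le)
  rw [key z (fun i => by rcases hz i with h | h <;> simp [h])]
  linarith
end

section
/- Define random variables by the recursion Y_0 = ω_0 γ, X_l = min{Y_l^{(1)},…,Y_l^{(d_R−1)}} for 0 ≤ l < T, and Y_l = ω_l γ + X_{l−1}^{(1)} + … + X_{l−1}^{(d_L−1)} for 0 < l < T, where all copies are mutually independent and each Y_l uses a fresh independent copy of γ. Then for every t ≥ 0 and every 0 ≤ s < l < T: E[e^{−tX_l}] ≤ (E[e^{−tX_s}])^{(d_L−1)^{l−s}} · Π_{k=0}^{l−s−1} ((d_R−1)·E[e^{−tω_{l−k}γ}])^{(d_L−1)^k}. -/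
open MeasureTheory ProbabilityTheory Real

/-- The min-sum recursion on a `(d_L, d_R)`-regular tree: `Y_0 = ω_0·γ`; for `0 ≤ l < T`,
`X_l` is the minimum of `d_R − 1` mutually independent copies of `Y_l`; and for `0 < l < T`,
`Y_l = ω_l·γ' + X_{l−1}^{(1)} + … + X_{l−1}^{(d_L−1)}` with a fresh copy `γ'` of `γ` and
mutually independent copies of `X_{l−1}`, all mutually independent. -/
structure MinSumRecursion {Ω : Type*} [MeasurableSpace Ω] (μ : MeasureTheory.Measure Ω)
    (γ : Ω → ℝ) (ω : ℕ → ℝ) (dL dR T : ℕ) (X Y : ℕ → Ω → ℝ) : Prop where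
  hY0 : IdentDistrib (Y 0) (fun o => ω 0 * γ o) μ μ
  hX : ∀ l < T, ∃ Z : Fin (dR - 1) → Ω → ℝ,
      iIndepFun Z μ ∧
      (∀ i, IdentDistrib (Z i) (Y l) μ μ) ∧
      ∀ o, X l o = sInf (Set.range fun i => Z i o)
  hY : ∀ l, 0 < l → l < T → ∃ (g : Ω → ℝ) (Z : Fin (dL - 1) → Ω → ℝ),
      IdentDistrib g γ μ μ ∧
      (∀ i, IdentDistrib (Z i) (X (l - 1)) μ μ) ∧
      iIndepFun
        (fun o : Option (Fin (dL - 1)) => Option.elim o g Z) μ ∧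
      ∀ o, Y l o = ω l * g o + ∑ i, Z i o

/-!
Write `L(Z) = E[e^{-tZ}] = mgf Z μ (-t)`. The minimum of finitely many reals is one of them, so
`e^{-t X_l}` is bounded by the sum of the `e^{-t Z_i}` over the `d_R - 1` copies of `Y_l`, giving
`L(X_l) ≤ (d_R - 1) L(Y_l)`; independence makes the transform of the sum `Y_l` the product
`L(ω_l γ) L(X_{l-1})^{d_L - 1}`. Unrolling this one-step bound from `l` down to `s` gives the
theorem.
-/

theorem comp_sInf_range_le_sum {ι : Type*} [Fintype ι] [Nonempty ι] {φ : ℝ → ℝ}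
    (hφ : ∀ x, 0 ≤ φ x) (f : ι → ℝ) :
    φ (sInf (Set.range f)) ≤ ∑ i, φ (f i) := by
  obtain ⟨i, hi⟩ : sInf (Set.range f) ∈ Set.range f :=
    (Set.range_nonempty f).csInf_mem (Set.finite_range f)
  rw [← hi]
  exact Finset.single_le_sum (fun j _ => hφ (f j)) (Finset.mem_univ i)

theorem integral_comp_sInf_range_le {Ω Ω' ι : Type*} [MeasurableSpace Ω] [MeasurableSpace Ω']
    {μ : Measure Ω} {ν : Measure Ω'} [Fintype ι] [Nonempty ι] {Z : ι → Ω → ℝ} {Y : Ω' → ℝ}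
    {φ : ℝ → ℝ} (hφ : Measurable φ) (hφ0 : ∀ x, 0 ≤ φ x) (hZ : ∀ i, IdentDistrib (Z i) Y μ ν)
    (hY : Integrable (fun o => φ (Y o)) ν) :
    ∫ o, φ (sInf (Set.range fun i => Z i o)) ∂μ ≤ Fintype.card ι * ∫ o, φ (Y o) ∂ν := by
  have hZφ : ∀ i, IdentDistrib (fun o => φ (Z i o)) (fun o => φ (Y o)) μ ν :=
    fun i => (hZ i).comp hφ
  have hint : ∀ i, Integrable (fun o => φ (Z i o)) μ := fun i => (hZφ i).integrable_iff.2 hY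
  calc ∫ o, φ (sInf (Set.range fun i => Z i o)) ∂μ
      ≤ ∫ o, ∑ i, φ (Z i o) ∂μ :=
        integral_mono_of_nonneg (.of_forall fun o => hφ0 _)
          (integrable_finsetSum _ fun i _ => hint i)
          (.of_forall fun o => comp_sInf_range_le_sum hφ0 _)
    _ = ∑ i, ∫ o, φ (Z i o) ∂μ := integral_finsetSum _ fun i _ => hint i
    _ = Fintype.card ι * ∫ o, φ (Y o) ∂ν := by
        simp only [fun i => (hZφ i).integral_eq, Finset.sum_const, Finset.card_univ,
          nsmul_eq_mul]

theorem mgf_const_mul_add_sum {Ω ι : Type*} [MeasurableSpace Ω] {μ : Measure Ω} [Fintype ι]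
    {g : Ω → ℝ} {Z : ι → Ω → ℝ} (hind : iIndepFun (fun j : Option ι => Option.elim j g Z) μ)
    (hg : AEMeasurable g μ) (hZ : ∀ i, AEMeasurable (Z i) μ) (a t : ℝ) :
    mgf (fun o => a * g o + ∑ i, Z i o) μ t = mgf (fun o => a * g o) μ t * ∏ i, mgf (Z i) μ t := by
  set W : Option ι → Ω → ℝ := fun j => Option.elim j (fun o => a * g o) Z
  have hW : iIndepFun W μ := by
    have := hind.comp (fun j => Option.elim j (fun x : ℝ => a * x) fun _ => id)
      (fun j => by cases j <;> simp only [Option.elim] <;> fun_prop)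
    convert this using 2 with j
    cases j <;> rfl
  have hWmeas : ∀ j, AEMeasurable (W j) μ := fun j => by cases j <;> simp [W, hg.const_mul, hZ]
  have hsum : (fun o => a * g o + ∑ i, Z i o) = ∑ j, W j := by
    ext o
    simp [W, Fintype.sum_option, Finset.sum_apply]
  rw [hsum, hW.mgf_sum₀ hWmeas, Fintype.prod_option]
  rfl

theorem pow_mul_prod_of_le_mul_pow {a b : ℕ → ℝ} {m s L : ℕ} (ha : ∀ k, 0 ≤ a k)
    (hb : ∀ k, 0 ≤ b k) (hstep : ∀ l, s < l → l ≤ L → a l ≤ b l * a (l - 1) ^ m)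
    {l : ℕ} (hsl : s ≤ l) (hlL : l ≤ L) :
    a l ≤ a s ^ (m ^ (l - s)) * ∏ k ∈ Finset.range (l - s), b (l - k) ^ (m ^ k) := by
  induction l, hsl using Nat.le_induction with
  | base => simp
  | succ l hsl ih =>
    have hprod : ∏ k ∈ Finset.range (l + 1 - s), b (l + 1 - k) ^ (m ^ k) =
        (∏ k ∈ Finset.range (l - s), b (l - k) ^ (m ^ k)) ^ m * b (l + 1) := by
      rw [Nat.sub_add_comm hsl, Finset.prod_range_succ', ← Finset.prod_pow]
      simp [pow_succ, pow_mul]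
    calc a (l + 1)
        ≤ b (l + 1) * a l ^ m := hstep (l + 1) (by omega) hlL
      _ ≤ b (l + 1) * (a s ^ (m ^ (l - s)) *
            ∏ k ∈ Finset.range (l - s), b (l - k) ^ (m ^ k)) ^ m := by
          gcongr
          · exact hb _
          · exact ha _
          · exact ih (by omega)
      _ = a s ^ (m ^ (l + 1 - s)) * ∏ k ∈ Finset.range (l + 1 - s), b (l + 1 - k) ^ (m ^ k) := by
          rw [hprod, Nat.sub_add_comm hsl, pow_succ, pow_mul]
          ring

theorem MinSumRecursion.mgf_X_le {Ω : Type*} [MeasurableSpace Ω] {μ : Measure Ω} {γ : Ω → ℝ}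
    {ω : ℕ → ℝ} {dL dR T : ℕ} {X Y : ℕ → Ω → ℝ} (hrec : MinSumRecursion μ γ ω dL dR T X Y)
    (hdR : 2 ≤ dR) {l : ℕ} (hl : 0 < l) (hlT : l < T) {t : ℝ}
    (hintY : Integrable (fun o => exp (t * Y l o)) μ) :
    mgf (X l) μ t ≤
      ((dR : ℝ) - 1) * mgf (fun o => ω l * γ o) μ t * mgf (X (l - 1)) μ t ^ (dL - 1) := by
  have hmin : mgf (X l) μ t ≤ ((dR : ℝ) - 1) * mgf (Y l) μ t := by
    obtain ⟨Z, -, hZ, hXZ⟩ := hrec.hX l hlT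
    have : Nonempty (Fin (dR - 1)) := ⟨⟨0, by omega⟩⟩
    have h := integral_comp_sInf_range_le (measurable_const_mul t).exp (fun _ => (exp_pos _).le)
      hZ hintY
    rw [Fintype.card_fin, Nat.cast_sub (by omega), Nat.cast_one] at h
    simpa only [mgf, hXZ] using h
  have hsum : mgf (Y l) μ t =
      mgf (fun o => ω l * γ o) μ t * mgf (X (l - 1)) μ t ^ (dL - 1) := by
    obtain ⟨g, Z, hg, hZ, hind, hYgZ⟩ := hrec.hY l hl hlT
    have hωg : IdentDistrib (fun o => ω l * g o) (fun o => ω l * γ o) μ μ :=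
      hg.comp (measurable_const_mul (ω l))
    rw [funext hYgZ, mgf_const_mul_add_sum hind hg.aemeasurable_fst
      (fun i => (hZ i).aemeasurable_fst), mgf_congr_identDistrib hωg,
      Fintype.prod_congr _ _ fun i => congrFun (mgf_congr_identDistrib (hZ i)) t,
      Finset.prod_const, Finset.card_univ, Fintype.card_fin]
  rwa [hsum, ← mul_assoc] at hmin

theorem laplace_recursion_bound_general
    {Ω : Type*} [MeasurableSpace Ω] (μ : MeasureTheory.Measure Ω)
    (γ : Ω → ℝ) (ω : ℕ → ℝ)
    (dL dR T : ℕ) (hdR : 2 ≤ dR)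
    (X Y : ℕ → Ω → ℝ)
    (hrec : MinSumRecursion μ γ ω dL dR T X Y)
    (hintY : ∀ (l : ℕ) (t : ℝ), 0 ≤ t → Integrable (fun o => exp (-t * Y l o)) μ)
    (t : ℝ) (ht : 0 ≤ t) (s l : ℕ) (hsl : s < l) (hlT : l < T) :
    ∫ o, exp (-t * X l o) ∂μ ≤
      (∫ o, exp (-t * X s o) ∂μ) ^ ((dL - 1) ^ (l - s)) *
        ∏ k ∈ Finset.range (l - s),
          (((dR : ℝ) - 1) * ∫ o, exp (-t * (ω (l - k) * γ o)) ∂μ) ^ ((dL - 1) ^ k) := by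
  have hdR1 : (0 : ℝ) ≤ (dR : ℝ) - 1 := by
    rw [sub_nonneg, Nat.one_le_cast]
    omega
  exact pow_mul_prod_of_le_mul_pow (L := l) (a := fun k => mgf (X k) μ (-t))
    (b := fun k => ((dR : ℝ) - 1) * mgf (fun o => ω k * γ o) μ (-t))
    (fun _ => mgf_nonneg) (fun _ => mul_nonneg hdR1 mgf_nonneg)
    (fun k hk hkT => hrec.mgf_X_le hdR (by omega) (by omega) (by simpa using hintY k t ht))
    hsl.le le_rfl

/-- Recursive Laplace-transform bound (Arora–Daskalakis–Steurer): for the min-sum process on a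
`(d_L,d_R)`-regular tree, for every `t ≥ 0` and `0 ≤ s < l < T`,
`E[e^{−tX_l}] ≤ (E[e^{−tX_s}])^{(d_L−1)^{l−s}} · Π_{k=0}^{l−s−1}
  ((d_R−1)·E[e^{−tω_{l−k}γ}])^{(d_L−1)^k}`. -/
theorem laplace_recursion_bound
    {Ω : Type*} [MeasurableSpace Ω] (μ : MeasureTheory.Measure Ω) [IsProbabilityMeasure μ]
    (γ : Ω → ℝ) (ω : ℕ → ℝ) (hω : ∀ l, 0 ≤ ω l)
    (dL dR T : ℕ) (hdL : 2 ≤ dL) (hdR : 2 ≤ dR)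
    (X Y : ℕ → Ω → ℝ)
    (hrec : MinSumRecursion μ γ ω dL dR T X Y)
    (hmeasγ : Measurable γ) (hmeasX : ∀ l, Measurable (X l)) (hmeasY : ∀ l, Measurable (Y l))
    (hintγ : ∀ t : ℝ, 0 ≤ t → Integrable (fun o => exp (-t * γ o)) μ)
    (hintX : ∀ (l : ℕ) (t : ℝ), 0 ≤ t → Integrable (fun o => exp (-t * X l o)) μ)
    (hintY : ∀ (l : ℕ) (t : ℝ), 0 ≤ t → Integrable (fun o => exp (-t * Y l o)) μ)
    (t : ℝ) (ht : 0 ≤ t) (s l : ℕ) (hsl : s < l) (hlT : l < T) :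
    ∫ o, exp (-t * X l o) ∂μ ≤
      (∫ o, exp (-t * X s o) ∂μ) ^ ((dL - 1) ^ (l - s)) *
        ∏ k ∈ Finset.range (l - s),
          (((dR : ℝ) - 1) * ∫ o, exp (-t * (ω (l - k) * γ o)) ∂μ) ^ ((dL - 1) ^ k) :=
  laplace_recursion_bound_general μ γ ω dL dR T hdR X Y hrec hintY t ht s l hsl hlT
end

section
/- Define X_l, Y_l by the recursion Y_0 = γ, X_l = min of d_R−1 independent copies of Y_l, and Y_l = γ + sum of d_L−1 independent copies of X_{l−1}, with fresh independent copies of γ at each variable node. Set c_1 = min over t ≥ 0 of E[e^{−t X_0}], c_2 = (d_R−1)·E[e^{−tγ}] (at the minimizing t), and c = c_1 · c_2^{1/(d_L−2)}. If c < 1 and d_L, d_R > 2, then P(Σ_{i=1}^{d_L} X_{T−1}^{(i)} ≤ 0) ≤ c^{d_L·(d_L−1)^{T−1} − d_L}. -/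
open MeasureTheory ProbabilityTheory Real

theorem exp_mul_iInf_le_sum {ι : Type*} [Fintype ι] [Nonempty ι] (z : ι → ℝ) (t : ℝ) :
    exp (t * ⨅ i, z i) ≤ ∑ i, exp (t * z i) := by
  obtain ⟨i₀, hi₀⟩ := exists_eq_ciInf_of_finite (f := z)
  rw [← hi₀]
  exact Finset.single_le_sum (f := fun i => exp (t * z i)) (fun i _ => (exp_pos _).le)
    (Finset.mem_univ i₀)

theorem mgf_iInf_le_sum {Ω ι : Type*} [MeasurableSpace Ω] {μ : Measure Ω} [Fintype ι]
    [Nonempty ι] {Z : ι → Ω → ℝ} {t : ℝ}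
    (hint : ∀ i, Integrable (fun o => exp (t * Z i o)) μ) :
    mgf (fun o => ⨅ i, Z i o) μ t ≤ ∑ i, mgf (Z i) μ t := by
  refine (integral_mono_of_nonneg (ae_of_all _ fun _ => (exp_pos _).le)
    (integrable_finsetSum _ fun i _ => hint i)
    (ae_of_all _ fun o => exp_mul_iInf_le_sum _ t)).trans_eq ?_
  exact integral_finsetSum _ fun i _ => hint i

theorem measure_sum_le_le_exp_mul_mgf_pow {Ω ι : Type*} [MeasurableSpace Ω] {μ : Measure Ω}
    [IsProbabilityMeasure μ] [Fintype ι] {S : ι → Ω → ℝ} {Z : Ω → ℝ}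
    (hindep : iIndepFun S μ) (hmeas : ∀ i, Measurable (S i))
    (hident : ∀ i, IdentDistrib (S i) Z μ μ) {t : ℝ} (ht : t ≤ 0)
    (hint : Integrable (fun o => exp (t * Z o)) μ) (ε : ℝ) :
    μ.real {o | ∑ i, S i o ≤ ε} ≤ exp (-t * ε) * mgf Z μ t ^ Fintype.card ι := by
  have hintS : ∀ i ∈ Finset.univ, Integrable (fun o => exp (t * S i o)) μ := fun i _ =>
    ((hident i).comp (measurable_const_mul t).exp).integrable_iff.2 hint
  have hmgf : mgf (∑ i, S i) μ t = mgf Z μ t ^ Fintype.card ι := by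
    simp only [hindep.mgf_sum hmeas, mgf_congr_identDistrib (hident _), Finset.prod_const,
      Finset.card_univ]
  have hchernoff := measure_le_le_exp_mul_mgf ε ht (hindep.integrable_exp_mul_sum hmeas hintS)
  simpa only [Finset.sum_apply, hmgf] using hchernoff

theorem le_mul_pow_pow_sub_one_of_le_mul_pow {M : ℕ → ℝ} {a b c : ℝ} {m T : ℕ}
    (hm : 1 ≤ m) (hM : ∀ l, 0 ≤ M l) (hb : 0 ≤ b) (hc : c ^ (m - 1) = a ^ (m - 1) * b)
    (h0 : M 0 ≤ a) (hstep : ∀ l, l + 1 < T → M (l + 1) ≤ b * M l ^ m) :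
    ∀ l < T, M l ≤ a * c ^ (m ^ l - 1) := by
  intro l
  induction l with
  | zero => exact fun _ => by simpa using h0
  | succ l ih =>
    intro hl
    have hexp : m ^ (l + 1) - 1 = (m - 1) + m * (m ^ l - 1) := by
      have : 1 ≤ m ^ l := Nat.one_le_pow _ _ hm
      rw [pow_succ, Nat.mul_sub_one, mul_comm m]
      have : m ≤ m ^ l * m := Nat.le_mul_of_pos_left m this
      omega
    calc M (l + 1) ≤ b * M l ^ m := hstep l hl
      _ ≤ b * (a * c ^ (m ^ l - 1)) ^ m := by gcongr; exacts [hM l, ih (by omega)]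
      _ = a * a ^ (m - 1) * b * c ^ (m * (m ^ l - 1)) := by
        rw [← pow_succ', Nat.sub_add_cancel hm, mul_pow, ← pow_mul]; ring
      _ = a * c ^ (m ^ (l + 1) - 1) := by rw [hexp, pow_add, hc]; ring

namespace MinSumRecursion

variable {Ω : Type*} [MeasurableSpace Ω] {μ : Measure Ω} {γ : Ω → ℝ} {ω : ℕ → ℝ}
  {dL dR T : ℕ} {X Y : ℕ → Ω → ℝ}

theorem mgf_X_le_mul_mgf_Y (hrec : MinSumRecursion μ γ ω dL dR T X Y) (hdR : 1 < dR) {l : ℕ}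
    (hl : l < T) {t : ℝ} (hint : Integrable (fun o => exp (t * Y l o)) μ) :
    mgf (X l) μ t ≤ ((dR : ℝ) - 1) * mgf (Y l) μ t := by
  obtain ⟨Z, -, hZ, hXeq⟩ := hrec.hX l hl
  have : Nonempty (Fin (dR - 1)) := ⟨⟨0, by omega⟩⟩
  have hXZ : X l = fun o => ⨅ i, Z i o := funext hXeq
  have hintZ : ∀ i, Integrable (fun o => exp (t * Z i o)) μ := fun i =>
    ((hZ i).comp (measurable_const_mul t).exp).integrable_iff.2 hint
  calc mgf (X l) μ t ≤ ∑ i, mgf (Z i) μ t := hXZ ▸ mgf_iInf_le_sum hintZ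
    _ = ((dR : ℝ) - 1) * mgf (Y l) μ t := by
      simp only [mgf_congr_identDistrib (hZ _), Finset.sum_const, Finset.card_univ,
        Fintype.card_fin, nsmul_eq_mul, Nat.cast_sub hdR.le, Nat.cast_one]

theorem mgf_Y_succ_eq (hrec : MinSumRecursion μ γ ω dL dR T X Y) {l : ℕ} (hl : l + 1 < T)
    (t : ℝ) : mgf (Y (l + 1)) μ t = mgf γ μ (ω (l + 1) * t) * mgf (X l) μ t ^ (dL - 1) := by
  obtain ⟨g, Z, hg, hZ, hindep, hYeq⟩ := hrec.hY (l + 1) l.succ_pos hl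
  let W : Option (Fin (dL - 1)) → Ω → ℝ := fun j =>
    Option.elim j (fun o => ω (l + 1) * g o) Z
  have hWindep : iIndepFun W μ := by
    convert hindep.comp (fun j => Option.elim j (ω (l + 1) * ·) fun _ => id)
      (by rintro (_ | _); exacts [measurable_const_mul _, measurable_id])
    rename_i j; cases j <;> rfl
  have hWmeas : ∀ j, AEMeasurable (W j) μ := by
    rintro (_ | i)
    exacts [hg.aemeasurable_fst.const_mul _, (hZ i).aemeasurable_fst]
  have hYW : Y (l + 1) = ∑ j, W j := by
    ext o
    simp [hYeq, W, Fintype.sum_option, Finset.sum_apply]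
  rw [hYW, hWindep.mgf_sum₀ hWmeas, Fintype.prod_option]
  simp only [W, Option.elim, mgf_const_mul, mgf_congr_identDistrib hg,
    mgf_congr_identDistrib (hZ _), add_tsub_cancel_right, Finset.prod_const, Finset.card_univ,
    Fintype.card_fin]

theorem mgf_X_succ_le (hrec : MinSumRecursion μ γ ω dL dR T X Y) (hdR : 1 < dR) {l : ℕ}
    (hl : l + 1 < T) {t : ℝ} (hint : Integrable (fun o => exp (t * Y (l + 1) o)) μ) :
    mgf (X (l + 1)) μ t ≤
      ((dR : ℝ) - 1) * mgf γ μ (ω (l + 1) * t) * mgf (X l) μ t ^ (dL - 1) := by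
  rw [mul_assoc, ← hrec.mgf_Y_succ_eq hl t]
  exact hrec.mgf_X_le_mul_mgf_Y hdR hl hint

end MinSumRecursion

theorem uniform_weight_process_bound_general
    {Ω : Type*} [MeasurableSpace Ω] (μ : MeasureTheory.Measure Ω) [IsProbabilityMeasure μ]
    (γ : Ω → ℝ) (dL dR T : ℕ) (hdL : 2 < dL) (hdR : 2 < dR) (hT : 1 ≤ T)
    (X Y : ℕ → Ω → ℝ)
    (hrec : MinSumRecursion μ γ (fun _ => 1) dL dR T X Y)
    (hintX : ∀ (l : ℕ) (t : ℝ), 0 ≤ t → Integrable (fun o => exp (-t * X l o)) μ)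
    (hintY : ∀ (l : ℕ) (t : ℝ), 0 ≤ t → Integrable (fun o => exp (-t * Y l o)) μ)
    (tstar : ℝ) (htstar : 0 ≤ tstar)
    (hmin : ∀ t : ℝ, 0 ≤ t →
      ∫ o, exp (-tstar * X 0 o) ∂μ ≤ ∫ o, exp (-t * X 0 o) ∂μ)
    (c₁ c₂ c : ℝ)
    (hc₁ : c₁ = ∫ o, exp (-tstar * X 0 o) ∂μ)
    (hc₂ : c₂ = ((dR : ℝ) - 1) * ∫ o, exp (-tstar * γ o) ∂μ)
    (hc : c = c₁ * c₂ ^ ((1 : ℝ) / ((dL : ℝ) - 2)))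
    (S : Fin dL → Ω → ℝ)
    (hSindep : iIndepFun S μ)
    (hSident : ∀ i, IdentDistrib (S i) (X (T - 1)) μ μ)
    (hSmeas : ∀ i, Measurable (S i)) :
    (μ {o | ∑ i, S i o ≤ 0}).toReal ≤ c ^ (dL * (dL - 1) ^ (T - 1) - dL) := by
  have hc₁0 : 0 ≤ c₁ := hc₁ ▸ mgf_nonneg
  have hc₁1 : c₁ ≤ 1 := by simpa [hc₁] using hmin 0 le_rfl
  have hc₂0 : 0 ≤ c₂ := hc₂ ▸ mul_nonneg (by norm_num; omega) mgf_nonneg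
  have hcpow : c ^ (dL - 1 - 1) = c₁ ^ (dL - 1 - 1) * c₂ := by
    have hexp : (1 : ℝ) / ((dL : ℝ) - 2) = ((dL - 1 - 1 : ℕ) : ℝ)⁻¹ := by
      rw [Nat.sub_sub, Nat.cast_sub (by omega)]; norm_num
    rw [hc, hexp, mul_pow, Real.rpow_inv_natCast_pow hc₂0 (by omega)]
  have hMX : ∀ l < T, mgf (X l) μ (-tstar) ≤ c₁ * c ^ ((dL - 1) ^ l - 1) := by
    refine le_mul_pow_pow_sub_one_of_le_mul_pow (by omega) (fun _ => mgf_nonneg) hc₂0 hcpow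
      hc₁.ge fun l hl => ?_
    simpa [hc₂, mgf] using hrec.mgf_X_succ_le (by omega) hl (hintY (l + 1) tstar htstar)
  calc μ.real {o | ∑ i, S i o ≤ 0} ≤ mgf (X (T - 1)) μ (-tstar) ^ dL := by
        simpa using measure_sum_le_le_exp_mul_mgf_pow hSindep hSmeas hSident
          (neg_nonpos.2 htstar) (hintX (T - 1) tstar htstar) 0
    _ ≤ (c₁ * c ^ ((dL - 1) ^ (T - 1) - 1)) ^ dL := by
        gcongr
        exacts [mgf_nonneg, hMX (T - 1) (by omega)]
    _ ≤ c ^ (dL * (dL - 1) ^ (T - 1) - dL) := by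
        rw [mul_pow, ← pow_mul, Nat.sub_one_mul, mul_comm ((dL - 1) ^ (T - 1)) dL]
        exact mul_le_of_le_one_left (by rw [hc]; positivity) (pow_le_one₀ hc₁0 hc₁1)

/-- Uniform-weight error bound for the `(T, 1^T)` min-sum process: with
`c₁ = min_{t ≥ 0} E[e^{−tX_0}]`, `c₂ = (d_R−1)·E[e^{−t*γ}]` at the minimizing `t*`, and
`c = c₁·c₂^{1/(d_L−2)}`, if `c < 1` and `d_L, d_R > 2` then
`P(Σ_{i=1}^{d_L} X_{T−1}^{(i)} ≤ 0) ≤ c^{d_L·(d_L−1)^{T−1} − d_L}`. -/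
theorem uniform_weight_process_bound
    {Ω : Type*} [MeasurableSpace Ω] (μ : MeasureTheory.Measure Ω) [IsProbabilityMeasure μ]
    (γ : Ω → ℝ) (dL dR T : ℕ) (hdL : 2 < dL) (hdR : 2 < dR) (hT : 1 ≤ T)
    (X Y : ℕ → Ω → ℝ)
    (hrec : MinSumRecursion μ γ (fun _ => 1) dL dR T X Y)
    (hmeasγ : Measurable γ) (hmeasX : ∀ l, Measurable (X l)) (hmeasY : ∀ l, Measurable (Y l))
    (hintγ : ∀ t : ℝ, 0 ≤ t → Integrable (fun o => exp (-t * γ o)) μ)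
    (hintX : ∀ (l : ℕ) (t : ℝ), 0 ≤ t → Integrable (fun o => exp (-t * X l o)) μ)
    (hintY : ∀ (l : ℕ) (t : ℝ), 0 ≤ t → Integrable (fun o => exp (-t * Y l o)) μ)
    (tstar : ℝ) (htstar : 0 ≤ tstar)
    (hmin : ∀ t : ℝ, 0 ≤ t →
      ∫ o, exp (-tstar * X 0 o) ∂μ ≤ ∫ o, exp (-t * X 0 o) ∂μ)
    (c₁ c₂ c : ℝ)
    (hc₁ : c₁ = ∫ o, exp (-tstar * X 0 o) ∂μ)
    (hc₂ : c₂ = ((dR : ℝ) - 1) * ∫ o, exp (-tstar * γ o) ∂μ)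
    (hc : c = c₁ * c₂ ^ ((1 : ℝ) / ((dL : ℝ) - 2)))
    (hclt : c < 1)
    (S : Fin dL → Ω → ℝ)
    (hSindep : iIndepFun S μ)
    (hSident : ∀ i, IdentDistrib (S i) (X (T - 1)) μ μ)
    (hSmeas : ∀ i, Measurable (S i)) :
    (μ {o | ∑ i, S i o ≤ 0}).toReal ≤ c ^ (dL * (dL - 1) ^ (T - 1) - dL) :=
  uniform_weight_process_bound_general μ γ dL dR T hdL hdR hT X Y hrec hintX hintY tstar htstar hmin
    c₁ c₂ c hc₁ hc₂ hc S hSindep hSident hSmeas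
end
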